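/- arXiv:1406.3414 — 5 statements merged into one kernel-verified Lean document; each statement's English description precedes it below -/
import Mathlib

section
/- The zeta transform of the union product of two functions equals the pointwise product of their zeta transforms: for all X ⊆ V, ζ(f *_u g)(X) = (ζf)(X) · (ζg)(X). -/
/-- The union product of two set functions. -/
def unionProd {V : Type*} [DecidableEq V] {R : Type*} [CommRing R]
    (f g : Finset V → R) : Finset V → R := fun X =>
  ∑ p ∈ (X.powerset ×ˢ X.powerset).filter (fun p => p.1 ∪ p.2 = X),
    f p.1 * g p.2

theorem zeta_unionProd {V : Type*} [Fintype V] [DecidableEq V]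
    {R : Type*} [CommRing R] (f g : Finset V → R) (X : Finset V) :
    ∑ Y ∈ X.powerset, unionProd f g Y
      = (∑ Y ∈ X.powerset, f Y) * (∑ Y ∈ X.powerset, g Y) := by
  rw [Finset.sum_mul_sum]
  have h : ∀ Y ∈ X.powerset, unionProd f g Y =
      ∑ p ∈ (X.powerset ×ˢ X.powerset).filter (fun p => p.1 ∪ p.2 = Y), f p.1 * g p.2 := by
    intro Y hY
    simp only [Finset.mem_powerset] at hY
    unfold unionProd
    apply Finset.sum_congr _ (fun _ _ => rfl)
    ext p
    simp only [Finset.mem_filter, Finset.mem_product, Finset.mem_powerset]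
    constructor
    · rintro ⟨⟨h1, h2⟩, h3⟩
      exact ⟨⟨h1.trans hY, h2.trans hY⟩, h3⟩
    · rintro ⟨⟨_, _⟩, h3⟩
      subst h3
      exact ⟨⟨Finset.subset_union_left, Finset.subset_union_right⟩, rfl⟩
  rw [Finset.sum_congr rfl h, Finset.sum_fiberwise_eq_sum_filter]
  rw [Finset.filter_true_of_mem]
  · rw [Finset.sum_product]
  · intro p hp
    simp only [Finset.mem_product, Finset.mem_powerset] at hp ⊢
    exact Finset.union_subset hp.1 hp.2
end

section
/- Introduce-edge recurrence: let e = {u,v} ⊆ V with u ≠ v, and let f, g : Finset V → R satisfy f(X) = g(X) if e ⊄ X, and f(X) = g(X) + g(X \ {u,v}) if e ⊆ X. Then (ζf)(X) = (ζg)(X) if e ⊄ X, and (ζf)(X) = (ζg)(X) + (ζg)(X \ {u,v}) if e ⊆ X. -/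
theorem zeta_introduce_edge {V : Type*} [Fintype V] [DecidableEq V]
    {R : Type*} [CommRing R] (f g : Finset V → R) (u v : V) (huv : u ≠ v)
    (hfg1 : ∀ X : Finset V, ¬ ({u, v} : Finset V) ⊆ X → f X = g X)
    (hfg2 : ∀ X : Finset V, ({u, v} : Finset V) ⊆ X →
      f X = g X + g (X \ {u, v})) :
    ∀ X : Finset V,
      (¬ ({u, v} : Finset V) ⊆ X →
        ∑ Y ∈ X.powerset, f Y = ∑ Y ∈ X.powerset, g Y) ∧
      (({u, v} : Finset V) ⊆ X →
        ∑ Y ∈ X.powerset, f Y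
          = (∑ Y ∈ X.powerset, g Y) + ∑ Y ∈ (X \ {u, v}).powerset, g Y) := by
  intro X
  constructor
  · intro hX
    refine Finset.sum_congr rfl fun Y hY => ?_
    rw [Finset.mem_powerset] at hY
    exact hfg1 Y fun h => hX (h.trans hY)
  · intro hX
    have hsplit : ∀ Y ∈ X.powerset,
        f Y = g Y + (if ({u, v} : Finset V) ⊆ Y then g (Y \ {u, v}) else 0) := by
      intro Y _
      by_cases h : ({u, v} : Finset V) ⊆ Y
      · rw [if_pos h]; exact hfg2 Y h
      · rw [if_neg h, add_zero]; exact hfg1 Y h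
    rw [Finset.sum_congr rfl hsplit, Finset.sum_add_distrib]
    congr 1
    rw [← Finset.sum_filter]
    refine Finset.sum_nbij' (fun Y => Y \ ({u, v} : Finset V))
      (fun Z => Z ∪ ({u, v} : Finset V)) ?_ ?_ ?_ ?_ ?_
    · intro Y hY
      simp only [Finset.mem_filter, Finset.mem_powerset] at hY ⊢
      exact Finset.sdiff_subset_sdiff hY.1 le_rfl
    · intro Z hZ
      simp only [Finset.mem_powerset] at hZ
      simp only [Finset.mem_filter, Finset.mem_powerset]
      constructor
      · exact Finset.union_subset (hZ.trans (Finset.sdiff_subset)) hX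
      · exact Finset.subset_union_right
    · intro Y hY
      simp only [Finset.mem_filter, Finset.mem_powerset] at hY
      exact Finset.sdiff_union_of_subset hY.2
    · intro Z hZ
      simp only [Finset.mem_powerset] at hZ
      rw [Finset.union_sdiff_right, Finset.sdiff_eq_self_iff_disjoint]
      exact Finset.disjoint_of_subset_left hZ (Finset.sdiff_disjoint)
    · intros; rfl
end

section
/- Subset convolution via union products of a relaxation: let f, g : Finset V → R and let {f^i}, {g^i} be relaxations of f and g respectively. Define h^i = ∑_{j=0}^{i} f^j *_u g^{i-j}. Then {h^i} is a relaxation of the subset convolution f * g, i.e., for every X with |X| = i, h^i(X) = (f*g)(X), and h^i(X) = 0 when i < |X|. -/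
/-- The subset convolution of two set functions. -/
def subsetConv {V : Type*} [DecidableEq V] {R : Type*} [CommRing R]
    (f g : Finset V → R) : Finset V → R := fun X =>
  ∑ Y ∈ X.powerset, f Y * g (X \ Y)

theorem relaxation_subset_convolution {V : Type*} [Fintype V] [DecidableEq V]
    {R : Type*} [CommRing R] (f g : Finset V → R)
    (F G : ℕ → Finset V → R)
    (hF : ∀ X : Finset V, F X.card X = f X)
    (hF0 : ∀ (i : ℕ) (X : Finset V), i < X.card → F i X = 0)
    (hG : ∀ X : Finset V, G X.card X = g X)
    (hG0 : ∀ (i : ℕ) (X : Finset V), i < X.card → G i X = 0)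
    (H : ℕ → Finset V → R)
    (hH : ∀ (i : ℕ) (X : Finset V),
      H i X = ∑ j ∈ Finset.range (i + 1), unionProd (F j) (G (i - j)) X) :
    (∀ X : Finset V, H X.card X = subsetConv f g X) ∧
      (∀ (i : ℕ) (X : Finset V), i < X.card → H i X = 0) := by

  have key : ∀ (i j : ℕ) (p : Finset V × Finset V),
      j ≤ i → i < p.1.card + p.2.card →
      F j p.1 * G (i - j) p.2 = 0 := by
    intro i j p hj hlt
    rcases lt_or_ge j p.1.card with h | h
    · rw [hF0 j _ h, zero_mul]
    · rw [hG0 (i - j) _ (by omega), mul_zero]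
  constructor
  · intro X
    rw [hH]
    unfold subsetConv unionProd
    rw [Finset.sum_comm]
    rw [Finset.sum_congr rfl (fun p hp => ?_)]
    rotate_left
    · exact fun p => if Disjoint p.1 p.2 then f p.1 * g p.2 else 0
    · simp only [Finset.mem_filter, Finset.mem_product, Finset.mem_powerset] at hp
      obtain ⟨⟨h1, h2⟩, hu⟩ := hp
      by_cases hd : Disjoint p.1 p.2
      · have hcard : p.1.card + p.2.card = X.card := by
          rw [← Finset.card_union_of_disjoint hd, hu]
        rw [if_pos hd]
        rw [Finset.sum_eq_single p.1.card]
        · rw [hF, show X.card - p.1.card = p.2.card by omega, hG]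
        · intro b hb hne
          simp only [Finset.mem_range] at hb
          rcases lt_or_ge b p.1.card with h | h
          · rw [hF0 b _ h, zero_mul]
          · rw [hG0 (X.card - b) _ (by omega), mul_zero]
        · intro h
          exact absurd (Finset.mem_range.mpr (by omega)) h
      · rw [if_neg hd]
        apply Finset.sum_eq_zero
        intro j hj
        simp only [Finset.mem_range] at hj
        have hinter : (p.1 ∩ p.2).Nonempty := by
          rwa [Finset.not_disjoint_iff_nonempty_inter] at hd
        have := Finset.card_union_add_card_inter p.1 p.2
        have h1 : 1 ≤ (p.1 ∩ p.2).card := Finset.card_pos.mpr hinter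
        exact key X.card j p (by omega) (by rw [hu] at this; omega)
    · rw [Finset.sum_ite, Finset.sum_const_zero, add_zero]
      apply Finset.sum_nbij' (fun p => p.1) (fun Y => (Y, X \ Y))
      · intro p hp
        simp only [Finset.mem_filter, Finset.mem_product, Finset.mem_powerset] at hp ⊢
        exact hp.1.1.1
      · intro Y hY
        simp only [Finset.mem_filter, Finset.mem_product, Finset.mem_powerset] at hY ⊢
        exact ⟨⟨⟨hY, Finset.sdiff_subset⟩, Finset.union_sdiff_of_subset hY⟩,
          Finset.disjoint_sdiff⟩
      · intro p hp
        simp only [Finset.mem_filter, Finset.mem_product, Finset.mem_powerset] at hp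
        obtain ⟨⟨⟨h1, h2⟩, hu⟩, hd⟩ := hp
        have : X \ p.1 = p.2 := by
          rw [← hu, Finset.union_sdiff_cancel_left hd]
        ext <;> simp [this]
      · intro Y hY
        rfl
      · intro p hp
        simp only [Finset.mem_filter, Finset.mem_product, Finset.mem_powerset] at hp
        obtain ⟨⟨⟨h1, h2⟩, hu⟩, hd⟩ := hp
        have : X \ p.1 = p.2 := by
          rw [← hu, Finset.union_sdiff_cancel_left hd]
        rw [this]
  · intro i X hlt
    rw [hH]
    apply Finset.sum_eq_zero
    intro j hj
    simp only [Finset.mem_range] at hj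
    unfold unionProd
    apply Finset.sum_eq_zero
    intro p hp
    simp only [Finset.mem_filter, Finset.mem_product, Finset.mem_powerset] at hp
    have := Finset.card_union_le p.1 p.2
    rw [hp.2] at this
    exact key i j p (by omega) (by omega)
end

section
/- For any connected graph G, the minimum over all tree decompositions of G of the maximum size of unions of bags along root-to-leaf paths equals the tree-depth of G: h_m(G) = td(G). -/
/-- A rooted tree decomposition of a graph `G` on a finite vertex set `V`. -/
structure RootedTreeDecomp {V : Type} [Fintype V] [DecidableEq V]
    (G : SimpleGraph V) where
  ι : Type
  fintypeι : Fintype ι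
  T : SimpleGraph ι
  connected : T.Connected
  acyclic : T.IsAcyclic
  root : ι
  bag : ι → Finset V
  bag_path : ∀ (x y z : ι) (p : T.Walk x y), p.IsPath → z ∈ p.support →
    bag x ∩ bag y ⊆ bag z
  bag_edge : ∀ u v : V, G.Adj u v → ∃ x : ι, u ∈ bag x ∧ v ∈ bag x
  bag_cover : ∀ v : V, ∃ x : ι, v ∈ bag x

/-- The union of the bags along a walk in the decomposition tree. -/
def pathUnion {V : Type} [Fintype V] [DecidableEq V] {G : SimpleGraph V}
    (D : RootedTreeDecomp G) {x y : D.ι} (p : D.T.Walk x y) : Finset V :=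
  p.support.foldr (fun z acc => D.bag z ∪ acc) ∅

/-- `h` bounds the size of the union of bags along every root-to-leaf
(equivalently, root-to-node) path of the decomposition. -/
def PathUnionBound {V : Type} [Fintype V] [DecidableEq V] {G : SimpleGraph V}
    (D : RootedTreeDecomp G) (h : ℕ) : Prop :=
  ∀ (x : D.ι) (p : D.T.Walk D.root x), p.IsPath → (pathUnion D p).card ≤ h

/-- `h` bounds the tree-depth of `G`: there is a rooted tree on `V` of height
at most `h` whose closure contains `G`. -/
def TreeDepthBound {V : Type} [Fintype V] [DecidableEq V]
    (G : SimpleGraph V) (h : ℕ) : Prop :=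
  ∃ (T : SimpleGraph V) (r : V), T.Connected ∧ T.IsAcyclic ∧
    (∀ u v : V, G.Adj u v →
      (∀ p : T.Walk r v, p.IsPath → u ∈ p.support) ∨
      (∀ p : T.Walk r u, p.IsPath → v ∈ p.support)) ∧
    (∀ (v : V) (p : T.Walk r v), p.IsPath → p.support.length ≤ h)

/-!
A rooted tree of height `h` whose closure contains `G` is itself a tree decomposition once the bag
of each vertex is its set of ancestors: bags along a root path are nested, so their union is the
last one, of size at most `h`.

Conversely, given a decomposition, send each vertex `v` to the topmost node `top v` whose bag
contains it (the nodes containing `v` form a subtree), and order `V` by the depth of `top v`. Call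
`u` an ancestor of `v` when `top u` is an ancestor of `top v` and `u` precedes `v`. For connected
`G` this is the ancestor relation of a rooted tree on `V`, in which each vertex hangs below its
latest proper ancestor; adjacent vertices share a bag and are therefore comparable, and the
ancestors of `v` all lie in bags on the root path to `top v`, so the height is at most `h`.
-/

open Finset

lemma exists_parent_of_key {V κ : Type*} [DecidableEq V] [LinearOrder κ] (key : V → κ)
    (A : V → Finset V) (r : V) (mem_self : ∀ v, v ∈ A v)
    (key_lt : ∀ v, ∀ u ∈ A v, u ≠ v → key u < key v)
    (filter_eq : ∀ v, ∀ u ∈ A v, A u = (A v).filter (key · ≤ key u))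
    (exists_ne : ∀ v ≠ r, ∃ u ∈ A v, u ≠ v) :
    ∃ parent : V → V, ∀ v ≠ r, v ∉ A (parent v) ∧ A v = insert v (A (parent v)) := by
  have : ∀ v, ∃ p, v ≠ r → p ∈ (A v).erase v ∧ ∀ u ∈ (A v).erase v, key u ≤ key p := by
    intro v
    by_cases hv : v = r
    · exact ⟨v, fun h => absurd hv h⟩
    obtain ⟨u, hu, hne⟩ := exists_ne v hv
    obtain ⟨p, hp, hmax⟩ := ((A v).erase v).exists_max_image key ⟨u, mem_erase.2 ⟨hne, hu⟩⟩
    exact ⟨p, fun _ => ⟨hp, hmax⟩⟩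
  choose parent hparent using this
  refine ⟨parent, fun v hv => ?_⟩
  obtain ⟨hp, hmax⟩ := hparent v hv
  have hAp : A (parent v) = (A v).erase v := by
    rw [filter_eq v _ (mem_of_mem_erase hp)]
    ext u
    simp only [mem_filter, mem_erase]
    refine ⟨fun ⟨hu, hle⟩ => ⟨?_, hu⟩, fun ⟨hne, hu⟩ => ⟨hu, hmax u (mem_erase.2 ⟨hne, hu⟩)⟩⟩
    rintro rfl
    exact (key_lt u _ (mem_of_mem_erase hp) (ne_of_mem_erase hp)).not_ge hle
  rw [hAp]
  exact ⟨notMem_erase v _, (insert_erase (mem_self v)).symm⟩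

namespace SimpleGraph

variable {ι : Type*} {T : SimpleGraph ι} {ρ w x y z : ι}

-- The closure condition of `TreeDepthBound` is stated in exactly this form.
def IsAncestor (T : SimpleGraph ι) (ρ x y : ι) : Prop :=
  ∀ p : T.Walk ρ y, p.IsPath → x ∈ p.support

namespace IsAncestor

protected lemma refl : T.IsAncestor ρ x x :=
  fun p _ => p.end_mem_support

protected lemma trans (hxy : T.IsAncestor ρ x y) (hyz : T.IsAncestor ρ y z) :
    T.IsAncestor ρ x z := by
  classical
  intro p hp
  have hy := hyz p hp
  exact p.support_takeUntil_subset_support hy (hxy _ (hp.takeUntil hy))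

lemma mem_support (h : T.IsAncestor ρ x y) (p : T.Walk ρ y) : x ∈ p.support := by
  classical
  exact p.support_bypass_subset_support (h _ p.bypass_isPath)

lemma of_mem_support_of_isPath (hx : T.IsAncestor ρ w x) (hy : T.IsAncestor ρ w y) {p : T.Walk x y}
    (hp : p.IsPath) (hz : z ∈ p.support) : T.IsAncestor ρ w z := by
  classical
  intro q _
  -- `q` followed by either half of `p` reaches an end of `p`; the two halves share only `z`.
  have hnodup := hp.support_nodup
  rw [← p.take_spec hz, Walk.support_append] at hnodup
  have h₁ := hx.mem_support (q.append (p.takeUntil z hz).reverse)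
  have h₂ := hy.mem_support (q.append (p.dropUntil z hz))
  rw [Walk.mem_support_append_iff, Walk.support_reverse, List.mem_reverse] at h₁
  rw [Walk.mem_support_append_iff] at h₂
  rcases h₁ with h₁ | h₁
  · exact h₁
  rcases h₂ with h₂ | h₂
  · exact h₂
  rcases (Walk.mem_support_iff _).1 h₂ with rfl | h₂
  · exact q.end_mem_support
  · exact absurd h₂ (List.disjoint_of_nodup_append hnodup h₁)

end IsAncestor

lemma IsAcyclic.isAncestor_of_mem_support (ha : T.IsAcyclic) {p : T.Walk ρ y} (hp : p.IsPath)
    (hx : x ∈ p.support) : T.IsAncestor ρ x y := fun q hq => by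
  have hpq : p = q := congrArg Subtype.val ((ha.subsingleton_path ρ y).elim ⟨p, hp⟩ ⟨q, hq⟩)
  exact hpq ▸ hx

lemma IsTree.isAncestor_total (hT : T.IsTree) (hx : T.IsAncestor ρ x z)
    (hy : T.IsAncestor ρ y z) : T.IsAncestor ρ x y ∨ T.IsAncestor ρ y x := by
  classical
  obtain ⟨p, hp⟩ := hT.connected.exists_isPath ρ z
  have hxp := hx p hp
  have hyp := hy p hp
  refine (List.prefix_or_prefix_of_prefix (p.support_takeUntil_prefix_support hxp)
    (p.support_takeUntil_prefix_support hyp)).imp (fun h => ?_) (fun h => ?_)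
  · exact hT.isAcyclic.isAncestor_of_mem_support (hp.takeUntil hyp) (h.subset (Walk.end_mem_support _))
  · exact hT.isAcyclic.isAncestor_of_mem_support (hp.takeUntil hxp) (h.subset (Walk.end_mem_support _))

lemma IsTree.isAncestor_or_isAncestor_of_adj (hT : T.IsTree) (h : T.Adj x y) :
    T.IsAncestor ρ x y ∨ T.IsAncestor ρ y x := by
  obtain ⟨p, hp⟩ := hT.connected.exists_isPath ρ x
  obtain ⟨q, hq⟩ := hT.connected.exists_isPath ρ y
  by_cases hx : x ∈ q.support
  · exact .inl (hT.isAcyclic.isAncestor_of_mem_support hq hx)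
  · exact .inr (hT.isAcyclic.isAncestor_of_mem_support hp
      (hT.isAcyclic.mem_support_of_ne_mem_support_of_adj_of_isPath hp hq h hx))

lemma Connected.dist_lt_of_isAncestor (hc : T.Connected) (h : T.IsAncestor ρ x y) (hne : x ≠ y) :
    T.dist ρ x < T.dist ρ y := by
  classical
  obtain ⟨p, hp, hlen⟩ := hc.exists_path_of_dist ρ y
  have hx := h p hp
  calc T.dist ρ x ≤ (p.takeUntil x hx).length := dist_le _
    _ < p.length := Walk.length_takeUntil_lt_length hx hne
    _ = T.dist ρ y := hlen

lemma IsTree.isAncestor_of_walk (hT : T.IsTree) {S : Set ι} {t : ι}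
    (ht : ∀ z ∈ S, T.IsAncestor ρ z t → z = t) {a b : ι} (p : T.Walk a b)
    (hp : ∀ z ∈ p.support, z ∈ S) (ha : T.IsAncestor ρ t a) : T.IsAncestor ρ t b := by
  induction p with
  | nil => exact ha
  | @cons a w b hadj p ih =>
    refine ih (fun z hz => hp z (List.mem_cons_of_mem _ hz)) ?_
    rcases hT.isAncestor_or_isAncestor_of_adj hadj with h | h
    · exact ha.trans h
    rcases hT.isAncestor_total ha h with h' | h'
    · exact h'
    · rw [ht w (hp w (by simp)) h']
      exact .refl

section ParentGraph

variable {V : Type*} {r : V} {parent : V → V}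

def parentGraph (r : V) (parent : V → V) : SimpleGraph V :=
  fromRel fun v w => v ≠ r ∧ w = parent v

lemma parentGraph_adj {v w : V} : (parentGraph r parent).Adj v w ↔
    v ≠ w ∧ (v ≠ r ∧ w = parent v ∨ w ≠ r ∧ v = parent w) :=
  fromRel_adj ..

lemma parentGraph_isAcyclic [Finite V] (rank : V → ℕ) (hrank : ∀ v ≠ r, rank (parent v) < rank v)
    (hc : (parentGraph r parent).Connected) : (parentGraph r parent).IsAcyclic := by
  refine (isTree_iff_connected_and_card.2 ⟨hc, ?_⟩).isAcyclic
  -- `v ↦ s(v, parent v)` matches the non-root vertices with the edges.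
  let e : {v // v ≠ r} → (parentGraph r parent).edgeSet := fun v =>
    ⟨s(v.1, parent v.1), parentGraph_adj.2
      ⟨fun h => (hrank v v.2).ne (congrArg rank h).symm, .inl ⟨v.2, rfl⟩⟩⟩
  have he : Function.Bijective e := by
    constructor
    · rintro ⟨v, hv⟩ ⟨w, hw⟩ h
      rcases Sym2.eq_iff.1 (congrArg Subtype.val h) with ⟨h, -⟩ | ⟨h₁, h₂⟩
      · exact Subtype.ext h
      · simp only at h₁ h₂
        have hw' := hrank w hw
        have hv' := hrank v hv
        rw [← h₁] at hw'
        rw [h₂] at hv'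
        omega
    · rintro ⟨e', he'⟩
      induction e' using Sym2.ind with
      | _ v w =>
      rw [mem_edgeSet] at he'
      obtain ⟨-, ⟨hv, rfl⟩ | ⟨hw, rfl⟩⟩ := parentGraph_adj.1 he'
      · exact ⟨⟨v, hv⟩, rfl⟩
      · exact ⟨⟨w, hw⟩, Subtype.ext Sym2.eq_swap⟩
  have := Fintype.ofFinite V
  classical
  rw [← Nat.card_congr (Equiv.ofBijective e he), Nat.card_eq_fintype_card,
    Nat.card_eq_fintype_card, Fintype.card_subtype_compl, Fintype.card_subtype_eq]
  have := Fintype.card_pos_iff.2 ⟨r⟩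
  omega

variable [DecidableEq V] {A : V → Finset V}

lemma parentGraph_exists_isPath_support_eq (hr : A r = {r})
    (hA : ∀ v ≠ r, v ∉ A (parent v) ∧ A v = insert v (A (parent v))) (v : V) :
    ∃ p : (parentGraph r parent).Walk r v, p.IsPath ∧ p.support.toFinset = A v := by
  induction hn : (A v).card using Nat.strong_induction_on generalizing v with
  | _ n ih =>
  by_cases hv : v = r
  · subst hv
    exact ⟨.nil, .nil, by simp [hr]⟩
  obtain ⟨hnot, hins⟩ := hA v hv
  obtain ⟨p, hp, hsupp⟩ :=
    ih _ (by rw [← hn, hins, card_insert_of_notMem hnot]; omega) (parent v) rfl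
  have hne : parent v ≠ v := fun h => hnot (by rw [h, hins]; exact mem_insert_self _ _)
  have hadj : (parentGraph r parent).Adj (parent v) v := parentGraph_adj.2 ⟨hne, .inr ⟨hv, rfl⟩⟩
  refine ⟨p.concat hadj, hp.concat (by rwa [← List.mem_toFinset, hsupp]) hadj, ?_⟩
  rw [Walk.support_concat, List.toFinset_append, hsupp, hins]
  simp

theorem exists_isTree_isAncestor_iff [Finite V] (hr : A r = {r})
    (hA : ∀ v ≠ r, v ∉ A (parent v) ∧ A v = insert v (A (parent v))) :
    ∃ T : SimpleGraph V, T.IsTree ∧ ∀ u v, T.IsAncestor r u v ↔ u ∈ A v := by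
  choose p hp hsupp using parentGraph_exists_isPath_support_eq hr hA
  have hc : (parentGraph r parent).Connected :=
    (connected_iff_exists_forall_reachable _).2 ⟨r, fun v => (p v).reachable⟩
  have ha := parentGraph_isAcyclic (fun v => (A v).card) (fun v hv => by
    rw [(hA v hv).2, card_insert_of_notMem (hA v hv).1]; omega) hc
  refine ⟨_, ⟨hc, ha⟩, fun u v => ⟨fun h => ?_, fun h => ?_⟩⟩
  · rw [← hsupp v, List.mem_toFinset]
    exact h _ (hp v)
  · exact ha.isAncestor_of_mem_support (hp v) (by rwa [← List.mem_toFinset, hsupp])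

end ParentGraph

section Pullback

variable {V : Type*} [Fintype V] {f : V → ι} {u v : V}

noncomputable def depthKey (T : SimpleGraph ι) (ρ : ι) (f : V → ι) (v : V) :
    ℕ ×ₗ Fin (Fintype.card V) :=
  toLex (T.dist ρ (f v), Fintype.equivFin V v)

lemma depthKey_injective : Function.Injective (depthKey T ρ f) := fun _ _ h =>
  (Fintype.equivFin V).injective (congrArg (fun k => (ofLex k).2) h)

-- The ancestors of `v` in the tree on `V` built in `IsTree.exists_isTree_of_adj_comparable`.
open Classical in
noncomputable def pullbackAncestors (T : SimpleGraph ι) (ρ : ι) (f : V → ι) (v : V) :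
    Finset V :=
  {u | T.IsAncestor ρ (f u) (f v) ∧ depthKey T ρ f u ≤ depthKey T ρ f v}

lemma mem_pullbackAncestors : u ∈ pullbackAncestors T ρ f v ↔
    T.IsAncestor ρ (f u) (f v) ∧ depthKey T ρ f u ≤ depthKey T ρ f v := by
  simp [pullbackAncestors]

lemma mem_pullbackAncestors_self : v ∈ pullbackAncestors T ρ f v :=
  mem_pullbackAncestors.2 ⟨.refl, le_rfl⟩

lemma IsTree.mem_pullbackAncestors_of_isAncestor (hT : T.IsTree) {z : ι}
    (hu : T.IsAncestor ρ (f u) z) (hv : T.IsAncestor ρ (f v) z)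
    (h : depthKey T ρ f u ≤ depthKey T ρ f v) : u ∈ pullbackAncestors T ρ f v := by
  refine mem_pullbackAncestors.2 ⟨?_, h⟩
  rcases hT.isAncestor_total hu hv with h' | h'
  · exact h'
  by_contra hne
  have hlt := hT.connected.dist_lt_of_isAncestor h' fun heq => hne (heq ▸ .refl)
  exact hlt.not_ge (Prod.Lex.monotone_fst _ _ h)

lemma IsTree.pullbackAncestors_eq_filter (hT : T.IsTree) (hu : u ∈ pullbackAncestors T ρ f v) :
    pullbackAncestors T ρ f u =
      (pullbackAncestors T ρ f v).filter (depthKey T ρ f · ≤ depthKey T ρ f u) := by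
  obtain ⟨hanc, hle⟩ := mem_pullbackAncestors.1 hu
  ext w
  rw [mem_filter, mem_pullbackAncestors, mem_pullbackAncestors]
  refine ⟨fun ⟨hw, hwu⟩ => ⟨⟨hw.trans hanc, hwu.trans hle⟩, hwu⟩, fun ⟨⟨hw, _⟩, hwu⟩ => ?_⟩
  exact mem_pullbackAncestors.1 (hT.mem_pullbackAncestors_of_isAncestor hw hanc hwu)

theorem IsTree.exists_isTree_of_adj_comparable (hT : T.IsTree) (ρ : ι) (f : V → ι)
    {G : SimpleGraph V} (hG : G.Connected)
    (hf : ∀ u v, G.Adj u v → ∃ z, T.IsAncestor ρ (f u) z ∧ T.IsAncestor ρ (f v) z) :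
    ∃ (T' : SimpleGraph V) (r : V), T'.IsTree ∧
      (∀ u v, G.Adj u v → T'.IsAncestor r u v ∨ T'.IsAncestor r v u) ∧
      ∀ u v, T'.IsAncestor r u v → T.IsAncestor ρ (f u) (f v) := by
  classical
  set A := pullbackAncestors T ρ f
  set key := depthKey T ρ f
  have := hG.nonempty
  obtain ⟨r, -, hr⟩ := univ.exists_min_image key univ_nonempty
  have hAr : A r = {r} := eq_singleton_iff_unique_mem.2 ⟨mem_pullbackAncestors_self,
    fun u hu => depthKey_injective ((mem_pullbackAncestors.1 hu).2.antisymm (hr u (mem_univ _)))⟩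
  have exists_ne : ∀ v ≠ r, ∃ u ∈ A v, u ≠ v := by
    intro v hv
    -- Follow a `G`-walk from `v` to `r` until it first leaves `{u | v ∈ A u}`.
    obtain ⟨d, -, hd₁, hd₂⟩ := (hG.preconnected v r).some.exists_boundary_dart {u | v ∈ A u}
      mem_pullbackAncestors_self (by simpa [hAr] using hv)
    obtain ⟨z, h₁, h₂⟩ := hf _ _ d.adj
    have hvz := (mem_pullbackAncestors.1 hd₁).1.trans h₁
    rcases le_total (key d.snd) (key v) with h | h
    · exact ⟨d.snd, hT.mem_pullbackAncestors_of_isAncestor h₂ hvz h,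
        fun heq => hd₂ (heq ▸ mem_pullbackAncestors_self)⟩
    · exact absurd (hT.mem_pullbackAncestors_of_isAncestor hvz h₂ h) hd₂
  obtain ⟨parent, hparent⟩ := exists_parent_of_key key A r (fun _ => mem_pullbackAncestors_self)
    (fun _ _ hu hne => (mem_pullbackAncestors.1 hu).2.lt_of_ne (depthKey_injective.ne hne))
    (fun _ _ => hT.pullbackAncestors_eq_filter) exists_ne
  obtain ⟨T', hT', hanc⟩ := exists_isTree_isAncestor_iff hAr hparent
  refine ⟨T', r, hT', fun u v huv => ?_, fun u v h => (mem_pullbackAncestors.1 ((hanc u v).1 h)).1⟩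
  obtain ⟨z, hu, hv⟩ := hf u v huv
  rcases le_total (key u) (key v) with h | h
  · exact .inl ((hanc u v).2 (hT.mem_pullbackAncestors_of_isAncestor hu hv h))
  · exact .inr ((hanc v u).2 (hT.mem_pullbackAncestors_of_isAncestor hv hu h))

end Pullback

end SimpleGraph

lemma mem_pathUnion {V : Type} [Fintype V] [DecidableEq V] {G : SimpleGraph V}
    {D : RootedTreeDecomp G} {x y : D.ι} {p : D.T.Walk x y} {v : V} :
    v ∈ pathUnion D p ↔ ∃ z ∈ p.support, v ∈ D.bag z := by
  unfold pathUnion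
  induction p.support with
  | nil => simp
  | cons a l ih => simp [ih]

namespace RootedTreeDecomp

variable {V : Type} [Fintype V] [DecidableEq V] {G : SimpleGraph V} (D : RootedTreeDecomp G)

lemma isTree : D.T.IsTree := ⟨D.connected, D.acyclic⟩

noncomputable def top (v : V) : D.ι :=
  Function.argminOn (D.T.dist D.root) {x | v ∈ D.bag x} (D.bag_cover v)

lemma mem_bag_top (v : V) : v ∈ D.bag (D.top v) :=
  (Function.argminOn_mem _ _ _ : D.top v ∈ {x | v ∈ D.bag x})

lemma isAncestor_top {v : V} {y : D.ι} (hv : v ∈ D.bag y) :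
    D.T.IsAncestor D.root (D.top v) y := by
  obtain ⟨p, hp⟩ := D.connected.exists_isPath (D.top v) y
  refine D.isTree.isAncestor_of_walk (S := {x | v ∈ D.bag x}) (fun z hz hzt => ?_) p
    (fun z hz => D.bag_path _ _ z p hp hz (mem_inter.2 ⟨D.mem_bag_top v, hv⟩)) .refl
  by_contra hne
  exact Function.not_lt_argminOn _ _ hz (D.connected.dist_lt_of_isAncestor hzt hne)

theorem treeDepthBound (hG : G.Connected) {h : ℕ} (hD : PathUnionBound D h) :
    TreeDepthBound G h := by
  obtain ⟨T, r, hT, hedge, hanc⟩ := D.isTree.exists_isTree_of_adj_comparable D.root D.top hG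
    fun u v huv =>
      let ⟨y, hu, hv⟩ := D.bag_edge u v huv
      ⟨y, D.isAncestor_top hu, D.isAncestor_top hv⟩
  refine ⟨T, r, hT.connected, hT.isAcyclic, hedge, fun v p hp => ?_⟩
  obtain ⟨q, hq⟩ := D.connected.exists_isPath D.root (D.top v)
  calc p.support.length = p.support.toFinset.card :=
        (List.toFinset_card_of_nodup hp.support_nodup).symm
    _ ≤ (pathUnion D q).card := card_le_card fun u hu => mem_pathUnion.2
        ⟨D.top u, hanc u v (hT.isAcyclic.isAncestor_of_mem_support hp (List.mem_toFinset.1 hu))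
          q hq, D.mem_bag_top u⟩
    _ ≤ h := hD _ q hq

end RootedTreeDecomp

theorem TreeDepthBound.exists_pathUnionBound {V : Type} [Fintype V] [DecidableEq V]
    {G : SimpleGraph V} {h : ℕ} (hG : TreeDepthBound G h) :
    ∃ D : RootedTreeDecomp G, PathUnionBound D h := by
  classical
  obtain ⟨T, r, hc, ha, hedge, hheight⟩ := hG
  refine ⟨{ ι := V, fintypeι := inferInstance, T := T, connected := hc, acyclic := ha, root := r
            bag := fun x => {u | T.IsAncestor r u x}
            bag_path := fun x y z p hp hz u hu => ?_
            bag_edge := fun u v huv => ?_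
            bag_cover := fun v => ⟨v, by simpa using .refl⟩ }, fun x p hp => ?_⟩
  · simp only [mem_inter, mem_filter, mem_univ, true_and] at hu ⊢
    exact hu.1.of_mem_support_of_isPath hu.2 hp hz
  · rcases hedge u v huv with h | h
    · exact ⟨v, by simpa using ⟨h, .refl⟩⟩
    · exact ⟨u, by simpa using ⟨.refl, h⟩⟩
  calc (pathUnion _ p).card ≤ p.support.toFinset.card := card_le_card fun u hu => ?_
    _ ≤ p.support.length := List.toFinset_card_le _
    _ ≤ h := hheight x p hp
  obtain ⟨z, hz, huz⟩ := mem_pathUnion.1 hu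
  simp only [mem_filter, mem_univ, true_and] at huz
  exact List.mem_toFinset.2 (huz.trans (ha.isAncestor_of_mem_support hp hz) p hp)

theorem hm_eq_treedepth {V : Type} [Fintype V] [DecidableEq V]
    (G : SimpleGraph V) (hG : G.Connected) :
    sInf {h : ℕ | ∃ D : RootedTreeDecomp G, PathUnionBound D h}
      = sInf {h : ℕ | TreeDepthBound G h} := by
  congr 1
  ext h
  exact ⟨fun ⟨D, hD⟩ => D.treeDepthBound hG hD, TreeDepthBound.exists_pathUnionBound⟩
end

section
/- Join-node convolution identity for perfect matchings: let G₁ = (V, E₁) and G₂ = (V, E₂) be graphs on the same vertex set with E₁ ∩ E₂ = ∅, all edges of E₁ contained in A ∪ S and all edges of E₂ contained in B ∪ S, where V = A ∪ S ∪ B is a partition. For X ⊆ S, let f₁(X) = number of perfect matchings of the subgraph of G₁ induced on A ∪ X, f₂(X) = number of perfect matchings of the subgraph of G₂ induced on B ∪ X, and f(X) = number of perfect matchings of the subgraph of (V, E₁ ∪ E₂) induced on A ∪ B ∪ X. Then f(X) = ∑_{X' ⊆ X} f₁(X') · f₂(X \ X'). -/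
/-- The number of perfect matchings of the graph with edge set `E` induced on
the vertex set `W`: sets of edges of `E` lying inside `W` covering every
vertex of `W` exactly once. -/
noncomputable def pmCount {V : Type*} [Fintype V] [DecidableEq V]
    (E : Finset (Sym2 V)) (W : Finset V) : ℕ :=
  ({M : Finset (Sym2 V) | M ⊆ E ∧ (∀ e ∈ M, ∀ v ∈ e, v ∈ W) ∧
      ∀ v ∈ W, ∃! e, e ∈ M ∧ v ∈ e} : Set (Finset (Sym2 V))).ncard

/-!
A perfect matching `M` of `E₁ ∪ E₂` on `W` splits into `M ∩ E₁` and `M ∩ E₂`, which are perfect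
matchings of `E₁` and `E₂` on complementary parts `W₁` and `W \ W₁` of `W`; conversely, the union
of two such matchings is a perfect matching of `E₁ ∪ E₂` on `W`. When `E₁` and `E₂` are disjoint
this gives a convolution over all `W₁ ⊆ W`. For `W = A ∪ B ∪ X` only the parts `W₁ = A ∪ X'`
with `X' ⊆ X` contribute, since a vertex of `B` lies on no edge of `E₁` and a vertex of `A` on no
edge of `E₂`.
-/

open Finset

section

variable {V : Type*}

structure IsPerfectMatchingOn (E : Finset (Sym2 V)) (W : Finset V) (M : Finset (Sym2 V)) :
    Prop where
  subset : M ⊆ E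
  mem_of_mem_edge : ∀ e ∈ M, ∀ v ∈ e, v ∈ W
  existsUnique : ∀ v ∈ W, ∃! e, e ∈ M ∧ v ∈ e

variable [DecidableEq V]

def coveredPart (W : Finset V) (M : Finset (Sym2 V)) : Finset V :=
  {v ∈ W | ∃ e ∈ M, v ∈ e}

open Classical in
theorem pmCount_eq_card_filter [Fintype V] (E : Finset (Sym2 V)) (W : Finset V) :
    pmCount E W = #{M | IsPerfectMatchingOn E W M} := by
  rw [pmCount, ← Set.ncard_coe_finset]
  congr 1
  ext M
  simp only [coe_filter, mem_univ, true_and, Set.mem_ofPred_eq]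
  exact ⟨fun ⟨h₁, h₂, h₃⟩ => ⟨h₁, h₂, h₃⟩, fun ⟨h₁, h₂, h₃⟩ => ⟨h₁, h₂, h₃⟩⟩

theorem pmCount_eq_zero_of_forall_not_mem [Fintype V] {E : Finset (Sym2 V)} {W : Finset V}
    {v : V} (hv : v ∈ W) (hE : ∀ e ∈ E, v ∉ e) : pmCount E W = 0 := by
  classical
  rw [pmCount_eq_card_filter, card_eq_zero, filter_eq_empty_iff]
  intro M _ hM
  obtain ⟨e, ⟨he, hve⟩, -⟩ := hM.existsUnique v hv
  exact hE e (hM.subset he) hve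

namespace IsPerfectMatchingOn

variable {E E' : Finset (Sym2 V)} {W : Finset V} {M M' : Finset (Sym2 V)}

theorem restrict (hM : IsPerfectMatchingOn E W M) (hM' : M' ⊆ M) (hE' : M' ⊆ E') :
    IsPerfectMatchingOn E' (coveredPart W M') M' where
  subset := hE'
  mem_of_mem_edge e he v hv := mem_filter.2 ⟨hM.mem_of_mem_edge e (hM' he) v hv, e, he, hv⟩
  existsUnique v hv := by
    obtain ⟨hvW, e, he, hve⟩ := mem_filter.1 hv
    exact ⟨e, ⟨he, hve⟩, fun e' ⟨he', hve'⟩ =>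
      (hM.existsUnique v hvW).unique ⟨hM' he', hve'⟩ ⟨hM' he, hve⟩⟩

theorem coveredPart_eq {W₀ : Finset V} (hM : IsPerfectMatchingOn E W M) (hW : W ⊆ W₀) :
    coveredPart W₀ M = W := by
  ext v
  refine ⟨fun hv => ?_, fun hv => ?_⟩
  · obtain ⟨-, e, he, hve⟩ := mem_filter.1 hv
    exact hM.mem_of_mem_edge e he v hve
  · obtain ⟨e, ⟨he, hve⟩, -⟩ := hM.existsUnique v hv
    exact mem_filter.2 ⟨hW hv, e, he, hve⟩

theorem existsUnique_union (hM : IsPerfectMatchingOn E W M) {v : V} (hv : v ∈ W)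
    (hM' : ∀ e ∈ M', v ∉ e) : ∃! e, e ∈ M ∪ M' ∧ v ∈ e := by
  obtain ⟨e, ⟨he, hve⟩, huniq⟩ := hM.existsUnique v hv
  refine ⟨e, ⟨mem_union_left _ he, hve⟩, fun e' ⟨he', hve'⟩ => ?_⟩
  rcases mem_union.1 he' with he' | he'
  · exact huniq e' ⟨he', hve'⟩
  · exact absurd hve' (hM' e' he')

theorem union {E₁ E₂ : Finset (Sym2 V)} {W₁ W₂ : Finset V} {M₁ M₂ : Finset (Sym2 V)}
    (h₁ : IsPerfectMatchingOn E₁ W₁ M₁) (h₂ : IsPerfectMatchingOn E₂ W₂ M₂)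
    (hW : Disjoint W₁ W₂) : IsPerfectMatchingOn (E₁ ∪ E₂) (W₁ ∪ W₂) (M₁ ∪ M₂) where
  subset := union_subset_union h₁.subset h₂.subset
  mem_of_mem_edge e he v hv := by
    rcases mem_union.1 he with he | he
    · exact mem_union_left _ (h₁.mem_of_mem_edge e he v hv)
    · exact mem_union_right _ (h₂.mem_of_mem_edge e he v hv)
  existsUnique v hv := by
    rcases mem_union.1 hv with hv | hv
    · exact h₁.existsUnique_union hv fun e he hve =>
        disjoint_left.1 hW hv (h₂.mem_of_mem_edge e he v hve)
    · rw [union_comm]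
      exact h₂.existsUnique_union hv fun e he hve =>
        disjoint_left.1 hW (h₁.mem_of_mem_edge e he v hve) hv

theorem sdiff_coveredPart_inter {E₁ E₂ : Finset (Sym2 V)}
    (hM : IsPerfectMatchingOn (E₁ ∪ E₂) W M) (hE : Disjoint E₁ E₂) :
    W \ coveredPart W (M ∩ E₁) = coveredPart W (M ∩ E₂) := by
  ext v
  simp only [coveredPart, mem_sdiff, mem_filter, mem_inter, not_and, not_exists]
  refine ⟨fun ⟨hvW, hv₁⟩ => ⟨hvW, ?_⟩,
    fun ⟨hvW, e, ⟨he, he₂⟩, hve⟩ => ⟨hvW, fun _ e' ⟨he', he₁⟩ hve' => ?_⟩⟩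
  · obtain ⟨e, ⟨he, hve⟩, -⟩ := hM.existsUnique v hvW
    rcases mem_union.1 (hM.subset he) with he₁ | he₂
    · exact absurd hve (hv₁ hvW e ⟨he, he₁⟩)
    · exact ⟨e, ⟨he, he₂⟩, hve⟩
  · have : e' = e := (hM.existsUnique v hvW).unique ⟨he', hve'⟩ ⟨he, hve⟩
    exact disjoint_left.1 hE (this ▸ he₁) he₂

end IsPerfectMatchingOn

theorem union_inter_of_subset_of_disjoint {M₁ M₂ E₁ E₂ : Finset (Sym2 V)} (h₁ : M₁ ⊆ E₁)
    (h₂ : M₂ ⊆ E₂) (hE : Disjoint E₁ E₂) : (M₁ ∪ M₂) ∩ E₁ = M₁ := by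
  rw [union_inter_distrib_right, inter_eq_left.2 h₁,
    disjoint_iff_inter_eq_empty.1 (hE.symm.mono_left h₂), union_empty]

theorem sum_powerset_eq_sum_powerset_union_of_eq_zero {β : Type*} [AddCommMonoid β]
    {A B X : Finset V} (hAX : Disjoint A X) (g : Finset V → β)
    (hg : ∀ W₁ ⊆ A ∪ B ∪ X, ¬(A ⊆ W₁ ∧ Disjoint W₁ B) → g W₁ = 0) :
    ∑ W₁ ∈ (A ∪ B ∪ X).powerset, g W₁ = ∑ X' ∈ X.powerset, g (A ∪ X') := by
  have hinj : Set.InjOn (A ∪ ·) X.powerset := fun X₁ h₁ X₂ h₂ h => by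
    rw [← union_sdiff_cancel_left (hAX.mono_right (mem_powerset.1 h₁)),
      ← union_sdiff_cancel_left (hAX.mono_right (mem_powerset.1 h₂))]
    exact congrArg (· \ A) h
  rw [← sum_image hinj]
  refine (sum_subset ?_ fun W₁ hW₁ hW₁X => hg W₁ (mem_powerset.1 hW₁) ?_).symm
  · simp only [subset_iff, mem_image, mem_powerset]
    rintro _ ⟨X', hX', rfl⟩
    exact union_subset_union subset_union_left hX'
  · rintro ⟨hAW₁, hW₁B⟩
    refine hW₁X (mem_image.2 ⟨W₁ \ A, mem_powerset.2 fun v hv => ?_, union_sdiff_of_subset hAW₁⟩)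
    grind [disjoint_left]

theorem pmCount_union_eq_sum_powerset [Fintype V] {E₁ E₂ : Finset (Sym2 V)} (hE : Disjoint E₁ E₂)
    (W : Finset V) :
    pmCount (E₁ ∪ E₂) W = ∑ W₁ ∈ W.powerset, pmCount E₁ W₁ * pmCount E₂ (W \ W₁) := by
  classical
  rw [pmCount_eq_card_filter, card_eq_sum_card_fiberwise (f := fun M => coveredPart W (M ∩ E₁))
    (t := W.powerset) fun M _ => mem_powerset.2 (filter_subset _ _)]
  refine sum_congr rfl fun W₁ hW₁ => ?_
  rw [pmCount_eq_card_filter, pmCount_eq_card_filter, ← card_product]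
  refine card_bij' (fun M _ => (M ∩ E₁, M ∩ E₂)) (fun p _ => p.1 ∪ p.2) ?_ ?_ ?_ ?_
  · simp only [mem_filter, mem_univ, true_and, mem_product]
    rintro M ⟨hM, rfl⟩
    exact ⟨hM.restrict inter_subset_left inter_subset_right,
      hM.sdiff_coveredPart_inter hE ▸ hM.restrict inter_subset_left inter_subset_right⟩
  · simp only [mem_filter, mem_univ, true_and, mem_product]
    rintro ⟨M₁, M₂⟩ ⟨h₁, h₂⟩
    have hM := h₁.union h₂ disjoint_sdiff
    rw [union_sdiff_of_subset (mem_powerset.1 hW₁)] at hM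
    refine ⟨hM, ?_⟩
    rw [union_inter_of_subset_of_disjoint h₁.subset h₂.subset hE]
    exact h₁.coveredPart_eq (mem_powerset.1 hW₁)
  · intro M hM
    rw [← inter_union_distrib_left, inter_eq_left.2 (mem_filter.1 (mem_filter.1 hM).1).2.subset]
  · simp only [mem_filter, mem_univ, true_and, mem_product]
    rintro ⟨M₁, M₂⟩ ⟨h₁, h₂⟩
    rw [union_inter_of_subset_of_disjoint h₁.subset h₂.subset hE, union_comm,
      union_inter_of_subset_of_disjoint h₂.subset h₁.subset hE.symm]

theorem pmCount_mul_pmCount_sdiff_eq_zero [Fintype V] {E₁ E₂ : Finset (Sym2 V)}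
    {A B W W₁ : Finset V} (hB : ∀ b ∈ B, ∀ e ∈ E₁, b ∉ e) (hA : ∀ a ∈ A, ∀ e ∈ E₂, a ∉ e)
    (hAW : A ⊆ W) (hW₁ : ¬(A ⊆ W₁ ∧ Disjoint W₁ B)) :
    pmCount E₁ W₁ * pmCount E₂ (W \ W₁) = 0 := by
  rw [not_and_or, not_subset, not_disjoint_iff] at hW₁
  rcases hW₁ with ⟨a, ha, haW₁⟩ | ⟨b, hbW₁, hb⟩
  · exact mul_eq_zero_of_right _
      (pmCount_eq_zero_of_forall_not_mem (mem_sdiff.2 ⟨hAW ha, haW₁⟩) (hA a ha))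
  · exact mul_eq_zero_of_left (pmCount_eq_zero_of_forall_not_mem hbW₁ (hB b hb)) _

end

theorem pm_join_convolution_general {V : Type*} [Fintype V] [DecidableEq V]
    (E₁ E₂ : Finset (Sym2 V)) (A S B : Finset V)
    (hE : Disjoint E₁ E₂)
    (hAS : Disjoint A S) (hAB : Disjoint A B) (hSB : Disjoint S B)
    (hE₁ : ∀ e ∈ E₁, ∀ v ∈ e, v ∈ A ∪ S)
    (hE₂ : ∀ e ∈ E₂, ∀ v ∈ e, v ∈ B ∪ S) :
    ∀ X : Finset V, X ⊆ S →
      pmCount (E₁ ∪ E₂) (A ∪ B ∪ X)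
        = ∑ X' ∈ X.powerset,
            pmCount E₁ (A ∪ X') * pmCount E₂ (B ∪ (X \ X')) := by
  intro X hX
  have hAX : Disjoint A X := hAS.mono_right hX
  have hXB : Disjoint X B := hSB.mono_left hX
  have hB₁ : ∀ b ∈ B, ∀ e ∈ E₁, b ∉ e := fun b hb e he hbe =>
    (mem_union.1 (hE₁ e he b hbe)).elim (disjoint_left.1 hAB · hb) (disjoint_left.1 hSB · hb)
  have hA₂ : ∀ a ∈ A, ∀ e ∈ E₂, a ∉ e := fun a ha e he hae =>
    (mem_union.1 (hE₂ e he a hae)).elim (disjoint_left.1 hAB ha) (disjoint_left.1 hAS ha)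
  rw [pmCount_union_eq_sum_powerset hE, sum_powerset_eq_sum_powerset_union_of_eq_zero hAX _
    fun W₁ _ hW₁ => pmCount_mul_pmCount_sdiff_eq_zero hB₁ hA₂
      (subset_union_left.trans subset_union_left) hW₁]
  refine sum_congr rfl fun X' hX' => ?_
  have hX'X := mem_powerset.1 hX'
  rw [show (A ∪ B ∪ X) \ (A ∪ X') = B ∪ (X \ X') by ext v; grind [disjoint_left]]

theorem pm_join_convolution {V : Type*} [Fintype V] [DecidableEq V]
    (E₁ E₂ : Finset (Sym2 V)) (A S B : Finset V)
    (hE : Disjoint E₁ E₂)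
    (hloop : ∀ e ∈ E₁ ∪ E₂, ¬ e.IsDiag)
    (hAS : Disjoint A S) (hAB : Disjoint A B) (hSB : Disjoint S B)
    (hcover : A ∪ S ∪ B = Finset.univ)
    (hE₁ : ∀ e ∈ E₁, ∀ v ∈ e, v ∈ A ∪ S)
    (hE₂ : ∀ e ∈ E₂, ∀ v ∈ e, v ∈ B ∪ S) :
    ∀ X : Finset V, X ⊆ S →
      pmCount (E₁ ∪ E₂) (A ∪ B ∪ X)
        = ∑ X' ∈ X.powerset,
            pmCount E₁ (A ∪ X') * pmCount E₂ (B ∪ (X \ X')) :=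
  pm_join_convolution_general E₁ E₂ A S B hE hAS hAB hSB hE₁ hE₂
end
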